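/- arXiv:1606.07109 — 4 statements merged into one kernel-verified Lean document; each statement's English description precedes it below -/
import Mathlib

section
/- Let k be a field with automorphism σ, let a, b, u ∈ k with u ≠ 0 and u·σ(u) + a·u + b = 0. Set T = [[1−u, 1], [−u, 1]] and A = [[0, 1], [−b, −a]]. Then T is invertible and σ(T)·A·T⁻¹ = [[u, 1 − u + b/u], [0, b/u]], where σ(T) denotes the matrix obtained by applying σ entrywise. -/
theorem stmt_1 {k : Type*} [Field k] (σ : k ≃+* k)
    (a b u : k) (hu : u ≠ 0) (hb : b ≠ 0)
    (hric : u * σ u + a * u + b = 0) :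
    IsUnit (!![1 - u, 1; -u, 1] : Matrix (Fin 2) (Fin 2) k) ∧
    (!![1 - u, 1; -u, 1] : Matrix (Fin 2) (Fin 2) k).map ⇑σ * !![0, 1; -b, -a] *
      (!![1 - u, 1; -u, 1] : Matrix (Fin 2) (Fin 2) k)⁻¹
      = !![u, 1 - u + b / u; 0, b / u] := by
  have hdet : (!![1 - u, 1; -u, 1] : Matrix (Fin 2) (Fin 2) k).det = 1 := by
    simp [Matrix.det_fin_two_of]
  have hunit : IsUnit (!![1 - u, 1; -u, 1] : Matrix (Fin 2) (Fin 2) k) := by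
    rw [Matrix.isUnit_iff_isUnit_det, hdet]; exact isUnit_one
  refine ⟨hunit, ?_⟩
  have := hunit.invertible
  rw [Matrix.mul_inv_eq_iff_eq_mul_of_invertible]
  have hσ : σ u = (-(a * u + b)) / u := by
    field_simp
    linear_combination hric
  ext i j
  fin_cases i <;> fin_cases j <;>
    simp [Matrix.mul_apply, Fin.sum_univ_two, hσ] <;>
    field_simp <;> ring
end

section
/- Let C be an algebraically closed field of characteristic zero and σ the C-linear automorphism of C(x) with σ(x) = x + 1. Suppose r ∈ C(x) is nonzero and f ∈ C(x) satisfies δ(r)/r + δ(σ(r))/σ(r) = σ²(f) − f, where δ = d/dx. Then δ(r)/r = σ(g) − g for some g ∈ C(x); in fact g = f works, because σ(f) − f − δ(r)/r satisfies σ(y) = −y and hence vanishes. -/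
/-!
A derivation of `C(x)` is determined by its value at `x`, so `σ⁻¹ ∘ δ ∘ σ = δ` and δ commutes
with σ. Applying σ to `y := σ f - f - δ r / r` and using the hypothesis gives `σ y = -y`.
Writing `y = p / q`, the shift `x ↦ x + 1` preserves the leading coefficients of `p` and `q`, so comparing leading
coefficients in `p(x + 1) q(x) = -p(x) q(x + 1)` forces `p = 0`.
-/

namespace RatFunc

variable {K : Type*} [Field K]

theorem algHom_ext {L : Type*} [CommRing L] [Algebra K L] {f g : K⟮X⟯ →ₐ[K] L}
    (h : f X = g X) : f = g :=
  IsLocalization.algHom_ext (nonZeroDivisors (Polynomial K)) <|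
    Polynomial.algHom_ext <| by
      show f (algebraMap _ _ Polynomial.X) = g (algebraMap _ _ Polynomial.X)
      rwa [algebraMap_X]

theorem derivation_ext {D₁ D₂ : Derivation K K⟮X⟯ K⟮X⟯} (h : D₁ X = D₂ X) : D₁ = D₂ := by
  have hpoly : D₁.compAlgebraMap (Polynomial K) = D₂.compAlgebraMap (Polynomial K) :=
    Polynomial.derivation_ext <| by simpa using h
  have hpoly' (p : Polynomial K) : D₁ (algebraMap _ _ p) = D₂ (algebraMap _ _ p) :=
    congrArg (fun D : Derivation K (Polynomial K) K⟮X⟯ => D p) hpoly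
  ext y
  induction y using RatFunc.induction_on with
  | f p q _ => rw [Derivation.leibniz_div, Derivation.leibniz_div, hpoly', hpoly']

theorem derivation_commute_algEquiv {D : Derivation K K⟮X⟯ K⟮X⟯} {σ : K⟮X⟯ ≃ₐ[K] K⟮X⟯}
    (h : D (σ X) = σ (D X)) (y : K⟮X⟯) : D (σ y) = σ (D y) := by
  -- `D' = σ⁻¹ ∘ D ∘ σ`
  let D' : Derivation K K⟮X⟯ K⟮X⟯ :=
    D.liftOfRightInverse (f := σ.symm) σ.symm_apply_apply fun x hx => by simp_all
  have hD' (x : K⟮X⟯) : D' (σ.symm x) = σ.symm (D x) := Derivation.liftOfRightInverse_apply _ _ x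
  have hD'D : D' = D := derivation_ext <| by
    rw [← σ.symm_apply_apply X, hD', h, σ.symm_apply_apply, σ.symm_apply_apply]
  have hy := hD' (σ y)
  rw [hD'D, σ.symm_apply_apply] at hy
  rw [hy, σ.apply_symm_apply]

theorem eq_zero_of_laurent_eq_C_mul {r c : K} (hc : c ≠ 1) {y : K⟮X⟯}
    (h : laurent r y = C c * y) : y = 0 := by
  induction y using RatFunc.induction_on with
  | f p q hq =>
  have hq' : Polynomial.taylor r q ≠ 0 := by rwa [Ne, Polynomial.taylor_eq_zero]
  rw [laurent_div, ← algebraMap_C, mul_div_assoc', ← map_mul,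
    div_eq_div_iff (algebraMap_ne_zero hq') (algebraMap_ne_zero hq), ← map_mul, ← map_mul,
    (algebraMap_injective K).eq_iff] at h
  have hlead := congrArg Polynomial.leadingCoeff h
  simp only [Polynomial.leadingCoeff_mul, Polynomial.leadingCoeff_taylor,
    Polynomial.leadingCoeff_C] at hlead
  have hpq : p.leadingCoeff * q.leadingCoeff = 0 := by
    have : (1 - c) * (p.leadingCoeff * q.leadingCoeff) = 0 := by linear_combination hlead
    exact (mul_eq_zero.mp this).resolve_left (sub_ne_zero.mpr hc.symm)
  have hp : p = 0 := by simpa [hq] using hpq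
  simp [hp]

end RatFunc

theorem stmt_4_general {C : Type*} [Field C] [CharZero C]
    (σ : RatFunc C ≃ₐ[C] RatFunc C) (hσ : σ RatFunc.X = RatFunc.X + 1)
    (δ : Derivation C (RatFunc C) (RatFunc C)) (hδ : δ RatFunc.X = 1)
    (r f : RatFunc C)
    (heq : δ r / r + δ (σ r) / σ r = σ (σ f) - f) :
    δ r / r = σ f - f := by
  have hσ_laurent : (σ : RatFunc C →ₐ[C] RatFunc C) = RatFunc.laurent 1 :=
    RatFunc.algHom_ext <| by simp [hσ]
  have hδσ (z : RatFunc C) : δ (σ z) = σ (δ z) :=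
    RatFunc.derivation_commute_algEquiv (by simp [hσ, hδ]) z
  set y := σ f - f - δ r / r
  have hy : σ y = -y := by
    simp only [y, map_sub, map_div₀, ← hδσ]
    linear_combination -heq
  have hy0 : y = 0 := by
    refine RatFunc.eq_zero_of_laurent_eq_C_mul (r := 1) (c := -1) (by norm_num) ?_
    rw [← AlgHom.coe_coe, ← hσ_laurent]
    simp [hy]
  linear_combination -hy0

theorem stmt_4 {C : Type*} [Field C] [CharZero C] [IsAlgClosed C]
    (σ : RatFunc C ≃ₐ[C] RatFunc C) (hσ : σ RatFunc.X = RatFunc.X + 1)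
    (δ : Derivation C (RatFunc C) (RatFunc C)) (hδ : δ RatFunc.X = 1)
    (r f : RatFunc C) (hr : r ≠ 0)
    (heq : δ r / r + δ (σ r) / σ r = σ (σ f) - f) :
    δ r / r = σ f - f :=
  stmt_4_general σ hσ δ hδ r f heq
end

section
/- Let C be an algebraically closed field of characteristic zero and σ the automorphism of C(x) given by x ↦ x + 1. If g ∈ C(x) is nonzero, squarefree (as a rational function, i.e., every zero and pole of g is simple), and g·σ(g) is a square in C(x), then g is a constant. -/
/-!
The order of `g` at `d` plus its order at `d + 1` is the order of `g * σ g` at `d`, hence even.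
As all orders lie in `{-1, 0, 1}`, a zero or pole of `g` at `d` forces one at `d + 1`, hence at
every `d + n`; in characteristic zero these are infinitely many points, which a rational function
cannot have. So `g` has neither zeros nor poles and, `C` being algebraically closed, is constant.
-/

open scoped Polynomial

theorem Set.Finite.eq_empty_of_add_one_mem {R : Type*} [AddGroupWithOne R] [CharZero R]
    {S : Set R} (hS : S.Finite) (h : ∀ d ∈ S, d + 1 ∈ S) : S = ∅ := by
  refine S.eq_empty_of_forall_notMem fun d hd => ?_
  have hmem : ∀ n : ℕ, d + n ∈ S := fun n => by
    induction n with
    | zero => simpa using hd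
    | succ n ih => simpa [add_assoc] using h _ ih
  exact Set.infinite_of_injective_forall_mem
    ((add_right_injective d).comp Nat.cast_injective) hmem hS

namespace RatFunc

variable {K : Type*} [Field K]

noncomputable def ordAt (g : RatFunc K) (d : K) : ℤ :=
  (g.num.rootMultiplicity d : ℤ) - g.denom.rootMultiplicity d

theorem ordAt_eq_of_eq_div {g : RatFunc K} {a b : K[X]} (ha : a ≠ 0) (hb : b ≠ 0)
    (h : g = algebraMap K[X] (RatFunc K) a / algebraMap K[X] (RatFunc K) b) (d : K) :
    g.ordAt d = (a.rootMultiplicity d : ℤ) - b.rootMultiplicity d := by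
  have hg : g ≠ 0 := h ▸ div_ne_zero (algebraMap_ne_zero ha) (algebraMap_ne_zero hb)
  have hcross : g.num * b = g.denom * a := by
    apply algebraMap_injective K
    rw [map_mul, map_mul, mul_comm _ (algebraMap _ _ a), ← div_eq_div_iff
      (algebraMap_ne_zero g.denom_ne_zero) (algebraMap_ne_zero hb), num_div_denom, h]
  have := congrArg (fun p => (p.rootMultiplicity d : ℤ)) hcross
  simp only [Polynomial.rootMultiplicity_mul (mul_ne_zero (num_ne_zero hg) hb),
    Polynomial.rootMultiplicity_mul (mul_ne_zero g.denom_ne_zero ha)] at this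
  unfold ordAt
  omega

theorem ordAt_mul {g h : RatFunc K} (hg : g ≠ 0) (hh : h ≠ 0) (d : K) :
    (g * h).ordAt d = g.ordAt d + h.ordAt d := by
  rw [ordAt_eq_of_eq_div (mul_ne_zero (num_ne_zero hg) (num_ne_zero hh))
      (mul_ne_zero g.denom_ne_zero h.denom_ne_zero),
    Polynomial.rootMultiplicity_mul (mul_ne_zero (num_ne_zero hg) (num_ne_zero hh)),
    Polynomial.rootMultiplicity_mul (mul_ne_zero g.denom_ne_zero h.denom_ne_zero)]
  · unfold ordAt; push_cast; ring
  · rw [map_mul, map_mul, ← div_mul_div_comm, num_div_denom, num_div_denom]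

theorem algEquiv_algebraMap_of_map_X {σ : RatFunc K ≃ₐ[K] RatFunc K} {c : K}
    (hσ : σ X = X + C c) (p : K[X]) :
    σ (algebraMap K[X] (RatFunc K) p) =
      algebraMap K[X] (RatFunc K) (p.comp (Polynomial.X + Polynomial.C c)) := by
  rw [← aeval_X_left_eq_algebraMap, ← aeval_X_left_eq_algebraMap, ← Polynomial.aeval_algHom_apply,
    hσ, Polynomial.aeval_comp]
  simp [aeval_X_left_eq_algebraMap]

theorem ordAt_algEquiv_of_map_X {σ : RatFunc K ≃ₐ[K] RatFunc K} {c : K}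
    (hσ : σ X = X + C c) {g : RatFunc K} (hg : g ≠ 0) (d : K) :
    (σ g).ordAt d = g.ordAt (d + c) := by
  have hshift (p : K[X]) : (p.comp (Polynomial.X + Polynomial.C c)).rootMultiplicity d =
      p.rootMultiplicity (d + c) := by
    simpa using Polynomial.rootMultiplicity_comp_C_mul_X_add_C p 1 c d isUnit_one
  rw [ordAt_eq_of_eq_div (Polynomial.comp_X_add_C_ne_zero_iff.2 (num_ne_zero hg))
      (Polynomial.comp_X_add_C_ne_zero_iff.2 g.denom_ne_zero), hshift, hshift]
  · rfl
  · rw [← algEquiv_algebraMap_of_map_X hσ, ← algEquiv_algebraMap_of_map_X hσ, ← map_div₀,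
      num_div_denom]

theorem finite_setOf_ordAt_ne_zero (g : RatFunc K) : {d | g.ordAt d ≠ 0}.Finite := by
  classical
  refine (g.num.roots.toFinset ∪ g.denom.roots.toFinset).finite_toSet.subset fun d hd => ?_
  simp only [Set.mem_ofPred_eq, ordAt] at hd
  simp only [Finset.coe_union, Set.mem_union, Finset.mem_coe, Multiset.mem_toFinset,
    ← Multiset.count_pos, Polynomial.count_roots]
  omega

theorem rootMultiplicity_num_eq_zero_or_denom (g : RatFunc K) (d : K) :
    g.num.rootMultiplicity d = 0 ∨ g.denom.rootMultiplicity d = 0 := by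
  by_contra! h
  have hdvd (p : K[X]) (hp : p.rootMultiplicity d ≠ 0) : Polynomial.X - Polynomial.C d ∣ p :=
    Polynomial.dvd_iff_isRoot.2 (Polynomial.rootMultiplicity_pos'.1 (Nat.pos_of_ne_zero hp)).2
  exact Polynomial.not_isUnit_X_sub_C d
    (g.isCoprime_num_denom.isUnit_of_dvd' (hdvd _ h.1) (hdvd _ h.2))

theorem exists_eq_C_of_ordAt_eq_zero [IsAlgClosed K] {g : RatFunc K}
    (h : ∀ d, g.ordAt d = 0) : ∃ c, g = C c := by
  classical
  have hmult (d : K) : g.num.rootMultiplicity d = 0 ∧ g.denom.rootMultiplicity d = 0 := by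
    have := h d
    unfold ordAt at this
    rcases g.rootMultiplicity_num_eq_zero_or_denom d with h0 | h0 <;> omega
  have hconst (p : K[X]) (hp : ∀ d, p.rootMultiplicity d = 0) : p.natDegree = 0 :=
    IsAlgClosed.roots_eq_zero_iff_natDegree_eq_zero.1 <|
      Multiset.eq_zero_of_forall_notMem fun d => by
        rw [← Multiset.count_ne_zero, Polynomial.count_roots, hp, ne_eq, not_not]
  exact g.eq_C_iff.2 ⟨hconst _ fun d => (hmult d).1, hconst _ fun d => (hmult d).2⟩

end RatFunc

theorem stmt_5 {C : Type*} [Field C] [CharZero C] [IsAlgClosed C]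
    (σ : RatFunc C ≃ₐ[C] RatFunc C) (hσ : σ RatFunc.X = RatFunc.X + 1)
    (g : RatFunc C) (hg : g ≠ 0)
    (hsf : ∀ d : C, ((g.num.rootMultiplicity d : ℤ) - (g.denom.rootMultiplicity d : ℤ))
        ∈ ({-1, 0, 1} : Set ℤ))
    (hsq : ∃ q : RatFunc C, g * σ g = q ^ 2) :
    ∃ c : C, g = RatFunc.C c := by
  obtain ⟨q, hq⟩ := hsq
  have hσg : σ g ≠ 0 := (map_ne_zero σ).2 hg
  have hq0 : q ≠ 0 := by
    rintro rfl
    exact mul_ne_zero hg hσg (by simpa using hq)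
  have hshift : σ RatFunc.X = RatFunc.X + RatFunc.C 1 := by rw [hσ, map_one]
  have hparity (d : C) : g.ordAt d + g.ordAt (d + 1) = 2 * q.ordAt d := by
    rw [← RatFunc.ordAt_algEquiv_of_map_X hshift hg, ← RatFunc.ordAt_mul hg hσg, hq, sq,
      RatFunc.ordAt_mul hq0 hq0]
    ring
  have hzero : {d | g.ordAt d ≠ 0} = ∅ :=
    g.finite_setOf_ordAt_ne_zero.eq_empty_of_add_one_mem fun d hd => by
      have h₀ : g.ordAt d ∈ ({-1, 0, 1} : Set ℤ) := hsf d
      have h₁ : g.ordAt (d + 1) ∈ ({-1, 0, 1} : Set ℤ) := hsf (d + 1)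
      simp only [Set.mem_ofPred_eq, Set.mem_insert_iff, Set.mem_singleton_iff] at hd h₀ h₁ ⊢
      have := hparity d
      omega
  exact RatFunc.exists_eq_C_of_ordAt_eq_zero fun d => by
    simpa using Set.eq_empty_iff_forall_notMem.1 hzero d
end

section
/- Let R be a difference ring with automorphism σ containing a difference field k, let r ∈ k be nonzero, and suppose y₁, y₂ ∈ R satisfy σ²(y₁) = −r·y₁ and σ²(y₂) = −r·y₂, and that ω := y₁·σ(y₂) − y₂·σ(y₁) is invertible. Then σ²(y₁·y₂/ω) = (r/σ(r))·(y₁·y₂/ω). -/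
lemma map_ring_inverse' {R : Type*} [CommRing R] (σ : R ≃+* R) (x : R) :
    σ (Ring.inverse x) = Ring.inverse (σ x) := by
  by_cases h : IsUnit x
  · obtain ⟨u, rfl⟩ := h
    rw [Ring.inverse_unit]
    have : σ (u : R) = ((Units.map (σ : R →* R) u : Rˣ) : R) := rfl
    rw [this, Ring.inverse_unit]
    rfl
  · have h' : ¬ IsUnit (σ x) := fun hx => h (by
      have := hx.map σ.symm
      simpa using this)
    rw [Ring.inverse_non_unit x h, Ring.inverse_non_unit _ h', map_zero]

theorem stmt_18 {R : Type*} [CommRing R] (σ : R ≃+* R)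
    (r y₁ y₂ : R) (hr : IsUnit r)
    (h1 : σ (σ y₁) = -r * y₁) (h2 : σ (σ y₂) = -r * y₂)
    (hω : IsUnit (y₁ * σ y₂ - y₂ * σ y₁)) :
    σ (σ (y₁ * y₂ * Ring.inverse (y₁ * σ y₂ - y₂ * σ y₁)))
      = r * Ring.inverse (σ r) * (y₁ * y₂ * Ring.inverse (y₁ * σ y₂ - y₂ * σ y₁)) := by
  set ω := y₁ * σ y₂ - y₂ * σ y₁ with hωdef
  have hσω : σ ω = r * ω := by
    simp only [hωdef, map_sub, map_mul, h1, h2]; ring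
  have hσσω : σ (σ ω) = σ r * (r * ω) := by
    rw [hσω, map_mul, hσω]
  have hσr : IsUnit (σ r) := hr.map σ
  calc σ (σ (y₁ * y₂ * Ring.inverse ω))
      = σ (σ y₁) * σ (σ y₂) * Ring.inverse (σ (σ ω)) := by
        simp only [map_mul, map_ring_inverse']
    _ = (-r * y₁) * (-r * y₂) * Ring.inverse (σ r * (r * ω)) := by
        rw [h1, h2, hσσω]
    _ = (r * r) * (y₁ * y₂) * (Ring.inverse (σ r) * (Ring.inverse r * Ring.inverse ω)) := by
        rw [Ring.mul_inverse_rev, Ring.mul_inverse_rev]; ring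
    _ = (r * Ring.inverse r) * r * Ring.inverse (σ r) * (y₁ * y₂ * Ring.inverse ω) := by
        ring
    _ = r * Ring.inverse (σ r) * (y₁ * y₂ * Ring.inverse ω) := by
        rw [Ring.mul_inverse_cancel r hr, one_mul]
end
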